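/- arXiv:2207.13230 — 4 statements merged into one kernel-verified Lean document; each statement's English description precedes it below -/
import Mathlib

section
/- Let ν_0, …, ν_{M−1} be pairwise distinct real numbers in [0, 2π) and α_0, …, α_{M−1} nonzero complex numbers, and define b : ℤ → ℂ by b[ℓ] = Σ_{m=0}^{M−1} α_m e^{−i ν_m ℓ}. Then the M × (M+1) Toeplitz matrix T with entries T_{j,k} = b[j − k] (0 ≤ j ≤ M−1, 0 ≤ k ≤ M) has rank exactly M. -/
open Complex in
theorem toeplitz_rank (M : ℕ) (hM : 0 < M) (ν : Fin M → ℝ) (α : Fin M → ℂ)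
    (hν : Function.Injective ν) (hνmem : ∀ m, ν m ∈ Set.Ico 0 (2 * Real.pi))
    (hα : ∀ m, α m ≠ 0)
    (b : ℤ → ℂ)
    (hb : ∀ ℓ : ℤ, b ℓ = ∑ m, α m * Complex.exp (-Complex.I * (ν m) * (ℓ : ℂ)))
    (T : Matrix (Fin M) (Fin (M + 1)) ℂ)
    (hT : ∀ j k, T j k = b ((j : ℤ) - (k : ℤ))) :
    T.rank = M := by
  have hpi := Real.pi_pos
  set x : Fin M → ℂ := fun m => Complex.exp (Complex.I * ν m) with hx
  have hxinj : Function.Injective x := by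
    intro m m' h
    apply hν
    simp only [hx] at h
    rw [Complex.exp_eq_exp_iff_exists_int] at h
    obtain ⟨n, hn⟩ := h
    have hI : Complex.I * (ν m) = Complex.I * ((ν m' : ℂ) + n * (2 * Real.pi)) := by
      rw [hn]; ring
    have hc : (ν m : ℂ) = (ν m' : ℂ) + n * (2 * Real.pi) :=
      mul_left_cancel₀ Complex.I_ne_zero hI
    have hr : (ν m : ℝ) = ν m' + n * (2 * Real.pi) := by exact_mod_cast hc
    obtain ⟨h1, h2⟩ := hνmem m
    obtain ⟨h3, h4⟩ := hνmem m'
    have hn1 : (n : ℝ) < 1 := by nlinarith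
    have hn2 : (-1 : ℝ) < n := by nlinarith
    have : n = 0 := by
      have : n < 1 := by exact_mod_cast hn1
      have : -1 < n := by exact_mod_cast hn2
      omega
    rw [this] at hr
    simpa using hr
  have hyinj : Function.Injective fun m => (x m)⁻¹ := fun a b h => hxinj (inv_injective h)
  set V : Matrix (Fin M) (Fin M) ℂ := (Matrix.vandermonde fun m => (x m)⁻¹).transpose with hV
  set W : Matrix (Fin M) (Fin M) ℂ := Matrix.diagonal α * Matrix.vandermonde x with hW
  have hfact : T.submatrix id Fin.castSucc = V * W := by
    ext j k
    simp only [Matrix.submatrix_apply, id_eq, hT, hb, Matrix.mul_apply, hV, hW,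
      Matrix.transpose_apply, Matrix.vandermonde, Matrix.of_apply, Matrix.diagonal_apply,
      ite_mul, zero_mul, Finset.sum_ite_eq, Finset.mem_univ, if_true]
    apply Finset.sum_congr rfl
    intro m _
    have hcast : (-Complex.I * (ν m) * (((j : ℤ) - ((Fin.castSucc k : Fin (M+1)) : ℤ) : ℤ) : ℂ))
        = (j : ℕ) * (-(Complex.I * ν m)) + (k : ℕ) * (Complex.I * ν m) := by
      push_cast [Fin.coe_castSucc]
      ring
    rw [hcast, Complex.exp_add, Complex.exp_nat_mul, Complex.exp_nat_mul, Complex.exp_neg]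
    ring
  have hdet : (V * W).det ≠ 0 := by
    rw [Matrix.det_mul, hV, hW, Matrix.det_transpose, Matrix.det_mul, Matrix.det_diagonal]
    exact mul_ne_zero (Matrix.det_vandermonde_ne_zero_iff.mpr hyinj)
      (mul_ne_zero (Finset.prod_ne_zero_iff.mpr fun m _ => hα m)
        (Matrix.det_vandermonde_ne_zero_iff.mpr hxinj))
  have hrankVW : (V * W).rank = M := by
    rw [Matrix.rank_of_isUnit _ ((Matrix.isUnit_iff_isUnit_det _).mpr
      (isUnit_iff_ne_zero.mpr hdet)), Fintype.card_fin]
  refine le_antisymm T.rank_le_height ?_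
  have hmul : T * (1 : Matrix (Fin (M+1)) (Fin (M+1)) ℂ).submatrix (Equiv.refl _) Fin.castSucc
      = T.submatrix id Fin.castSucc := by
    rw [Matrix.mul_submatrix_one]
    rfl
  calc (M : ℕ) = (V * W).rank := hrankVW.symm
    _ = (T * (1 : Matrix (Fin (M+1)) (Fin (M+1)) ℂ).submatrix (Equiv.refl _) Fin.castSucc).rank := by
        rw [hmul, hfact]
    _ ≤ T.rank := Matrix.rank_mul_le_left _ _
end

section
/- With s̃ = ŝ + c·δ as above and h the (K+1)-tap annihilating filter of ŝ (so h * ŝ = 0), the (K+1)×(K+1) Toeplitz matrix T_{s̃} built from s̃ satisfies T_{s̃} h = c·h; that is, the unknown DC offset c is an eigenvalue of T_{s̃} with eigenvector h. -/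
theorem dc_eigenvalue (K : ℕ) (ω₀ : ℝ) (t : Fin K → ℝ) (a : Fin K → ℂ) (c : ℂ)
    (s : ℤ → ℂ)
    (hs : ∀ ℓ : ℤ, s ℓ = ∑ k, a k * Complex.exp (-Complex.I * (ω₀ * (ℓ : ℝ) * t k)))
    (h : Fin (K + 1) → ℂ)
    (hann : ∀ ℓ : ℤ, ∑ j : Fin (K + 1), h j * s (ℓ - (j : ℤ)) = 0)
    (st : ℤ → ℂ) (hst : ∀ ℓ : ℤ, st ℓ = s ℓ + (if ℓ = 0 then c else 0))
    (T : Matrix (Fin (K + 1)) (Fin (K + 1)) ℂ)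
    (hT : ∀ j k, T j k = st ((j : ℤ) - (k : ℤ))) :
    T.mulVec h = c • h := by
  funext j
  simp only [Matrix.mulVec, dotProduct, Pi.smul_apply, smul_eq_mul]
  have : ∀ k : Fin (K+1), T j k * h k
      = h k * s ((j:ℤ) - (k:ℤ)) + (if (j:ℤ) - (k:ℤ) = 0 then c else 0) * h k := by
    intro k
    rw [hT, hst]
    ring
  rw [Finset.sum_congr rfl (fun k _ => this k), Finset.sum_add_distrib, hann]
  have hz : ∀ k : Fin (K+1), ((j:ℤ) - (k:ℤ) = 0) ↔ k = j := by
    intro k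
    constructor
    · intro hk
      have : (k:ℤ) = (j:ℤ) := by omega
      exact Fin.ext (by exact_mod_cast this)
    · intro hk; subst hk; ring
  rw [Finset.sum_congr rfl (fun k _ => by rw [if_congr (hz k) rfl rfl])]
  simp
end

section
/- Suppose y[n] = γ[n] − r[n] for n = 0, …, N−1, where the length-N DFT of γ is supported on E = [0, P] ∪ [N−P, N−1] and r̄ = Δr is an M-sparse sequence of spikes, with N ≥ 2(P + M + 1). Then the pair (γ, r) is uniquely determined from y up to a common additive constant: if y = γ − r = γ' − r' with both decompositions of this form (γ, γ' bandlimited to E; Δr, Δr' each at most M-sparse with values in 2λℤ), then Δγ = Δγ' and Δr = Δr'. -/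
theorem separation_uniqueness (N P M : ℕ) (lam : ℝ) (hlam : 0 < lam)
    (hN : 2 * (P + M + 1) ≤ N)
    (y : ℕ → ℂ)
    (c c' : ℤ → ℂ) (γ γ' : ℕ → ℂ) (r r' : ℕ → ℝ)
    (hγ : ∀ n, γ n = ∑ p ∈ Finset.Icc (-(P : ℤ)) (P : ℤ),
      c p * Complex.exp (Complex.I * (2 * Real.pi * p * n / N)))
    (hγ' : ∀ n, γ' n = ∑ p ∈ Finset.Icc (-(P : ℤ)) (P : ℤ),
      c' p * Complex.exp (Complex.I * (2 * Real.pi * p * n / N)))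
    (hrval : ∀ n < N, ∃ m : ℤ, r n = 2 * lam * m)
    (hrval' : ∀ n < N, ∃ m : ℤ, r' n = 2 * lam * m)
    (hrsp : ((Finset.range (N - 1)).filter (fun n => r (n + 1) ≠ r n)).card ≤ M)
    (hrsp' : ((Finset.range (N - 1)).filter (fun n => r' (n + 1) ≠ r' n)).card ≤ M)
    (hy : ∀ n < N, y n = γ n - (r n : ℂ))
    (hy' : ∀ n < N, y n = γ' n - (r' n : ℂ)) :
    ∀ n < N - 1, (γ (n + 1) - γ n = γ' (n + 1) - γ' n) ∧
      (r (n + 1) - r n = r' (n + 1) - r' n) := by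
  classical
  have hN0 : N ≠ 0 := by omega
  set ω : ℂ := Complex.exp (2 * Real.pi * Complex.I / N) with hω
  have hprim : IsPrimitiveRoot ω N := Complex.isPrimitiveRoot_exp N hN0
  have hωne : ω ≠ 0 := Complex.exp_ne_zero _
  set d : ℤ → ℂ := fun p => c p - c' p with hd
  have hpow : ∀ (p : ℤ) (n : ℕ),
      Complex.exp (Complex.I * (2 * Real.pi * p * n / N)) = ω ^ (p * n) := by
    intro p n
    rw [hω, ← Complex.exp_int_mul]
    congr 1
    push_cast
    ring
  have hH : ∀ n : ℕ, γ n - γ' n =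
      ∑ p ∈ Finset.Icc (-(P : ℤ)) (P : ℤ), d p * ω ^ (p * n) := by
    intro n
    rw [hγ, hγ', ← Finset.sum_sub_distrib]
    refine Finset.sum_congr rfl fun p _ => ?_
    rw [hpow]; ring
  have hgg : ∀ m, m < N → γ m - γ' m = (r m : ℂ) - r' m := by
    intro m hm
    have h1 := hy m hm
    have h2 := hy' m hm
    linear_combination h2 - h1
  set Q : Polynomial ℂ :=
    ∑ p ∈ Finset.Icc (-(P : ℤ)) (P : ℤ),
      Polynomial.C (d p * (ω ^ p - 1)) * Polynomial.X ^ (p + P).toNat with hQ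
  have hmul : ∀ a b : ℤ, ω ^ a * ω ^ b = ω ^ (a + b) := fun a b => (zpow_add₀ hωne a b).symm
  -- evaluation formula
  have hevalform : ∀ n : ℕ, Q.eval (ω ^ n) =
      ω ^ ((P : ℤ) * n) * ((γ (n + 1) - γ' (n + 1)) - (γ n - γ' n)) := by
    intro n
    rw [hQ, Polynomial.eval_finset_sum, hH (n + 1), hH n, ← Finset.sum_sub_distrib,
      Finset.mul_sum]
    refine Finset.sum_congr rfl fun p hp => ?_
    obtain ⟨hp1, hp2⟩ := Finset.mem_Icc.mp hp
    simp only [Polynomial.eval_mul, Polynomial.eval_C, Polynomial.eval_pow, Polynomial.eval_X]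
    have htn : (((p + P).toNat : ℤ)) = p + P := Int.toNat_of_nonneg (by omega)
    have h1 : (ω ^ n) ^ (p + P).toNat = ω ^ ((n : ℤ) * (p + P)) := by
      rw [← pow_mul, ← zpow_natCast]
      congr 1
      push_cast [htn]
      ring
    have h2 : (p * ((n : ℕ) + 1 : ℕ) : ℤ) = p * ((n : ℤ) + 1) := by push_cast; ring
    rw [h1, h2]
    calc d p * (ω ^ p - 1) * ω ^ ((n : ℤ) * (p + P))
        = d p * (ω ^ p * ω ^ ((n : ℤ) * (p + P))) - d p * ω ^ ((n : ℤ) * (p + P)) := by ring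
      _ = d p * ω ^ (p + (n : ℤ) * (p + P)) - d p * ω ^ ((n : ℤ) * (p + P)) := by rw [hmul]
      _ = d p * ω ^ ((P : ℤ) * n + p * ((n : ℤ) + 1)) - d p * ω ^ ((P : ℤ) * n + p * n) := by
          congr 2 <;> ring
      _ = ω ^ ((P : ℤ) * n) * (d p * ω ^ (p * ((n : ℤ) + 1)) - d p * ω ^ (p * (n : ℤ))) := by
          rw [← hmul, ← hmul]; ring
  -- the good set
  set S : Finset ℕ :=
    (Finset.range (N - 1)).filter (fun n => r (n + 1) = r n ∧ r' (n + 1) = r' n) with hS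
  have hScard : 2 * P < S.card := by
    have hsub : (Finset.range (N - 1)).filter
        (fun n => ¬(r (n + 1) = r n ∧ r' (n + 1) = r' n)) ⊆
        ((Finset.range (N - 1)).filter (fun n => r (n + 1) ≠ r n)) ∪
        ((Finset.range (N - 1)).filter (fun n => r' (n + 1) ≠ r' n)) := by
      intro x hx
      simp only [Finset.mem_filter, Finset.mem_union, Finset.mem_range] at hx ⊢
      tauto
    have hcup : ((Finset.range (N - 1)).filter
        (fun n => ¬(r (n + 1) = r n ∧ r' (n + 1) = r' n))).card ≤ 2 * M := by
      calc _ ≤ _ := Finset.card_le_card hsub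
        _ ≤ _ + _ := Finset.card_union_le _ _
        _ ≤ 2 * M := by omega
    have htot := Finset.card_filter_add_card_filter_not
      (s := Finset.range (N - 1)) (p := fun n => r (n + 1) = r n ∧ r' (n + 1) = r' n)
    rw [Finset.card_range, ← hS] at htot
    omega
  -- Q vanishes on ω^S
  have hQ0 : Q = 0 := by
    refine Polynomial.eq_zero_of_natDegree_lt_card_of_eval_eq_zero' Q
      (S.image (fun n => ω ^ n)) ?_ ?_
    · intro z hz
      obtain ⟨n, hn, rfl⟩ := Finset.mem_image.mp hz
      rw [hS] at hn
      obtain ⟨hn1, hn2, hn3⟩ := by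
        simpa only [Finset.mem_filter, Finset.mem_range] using hn
      rw [hevalform n]
      have e1 : γ (n + 1) - γ' (n + 1) = (r (n + 1) : ℂ) - r' (n + 1) :=
        hgg (n + 1) (by omega)
      have e2 : γ n - γ' n = (r n : ℂ) - r' n := hgg n (by omega)
      rw [e1, e2, hn2, hn3]
      ring
    · have hdeg : Q.natDegree ≤ 2 * P := by
        rw [hQ]
        refine Polynomial.natDegree_sum_le_of_forall_le _ _ fun p hp => ?_
        obtain ⟨hp1, hp2⟩ := Finset.mem_Icc.mp hp
        refine (Polynomial.natDegree_C_mul_X_pow_le _ _).trans ?_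
        omega
      have hinj : Set.InjOn (fun n => ω ^ n) S := by
        intro i hi j hj hij
        rw [hS] at hi hj
        simp only [Finset.coe_filter, Set.mem_setOf_eq, Finset.mem_range] at hi hj
        exact hprim.pow_inj (by omega) (by omega) hij
      rw [Finset.card_image_of_injOn hinj]
      omega
  -- coefficients vanish
  have hcoef : ∀ q ∈ Finset.Icc (-(P : ℤ)) (P : ℤ), d q * (ω ^ q - 1) = 0 := by
    intro q hq
    obtain ⟨hq1, hq2⟩ := Finset.mem_Icc.mp hq
    have h := congrArg (fun p => Polynomial.coeff p (q + P).toNat) hQ0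
    simp only [Polynomial.coeff_zero] at h
    rw [hQ, Polynomial.finset_sum_coeff] at h
    rw [← h, Finset.sum_eq_single q]
    · rw [Polynomial.coeff_C_mul, Polynomial.coeff_X_pow, if_pos rfl, mul_one]
    · intro p hp hpq
      obtain ⟨hp1, hp2⟩ := Finset.mem_Icc.mp hp
      rw [Polynomial.coeff_C_mul, Polynomial.coeff_X_pow, if_neg, mul_zero]
      intro hcon
      have h1 : ((q + P).toNat : ℤ) = q + P := Int.toNat_of_nonneg (by omega)
      have h2 : ((p + P).toNat : ℤ) = p + P := Int.toNat_of_nonneg (by omega)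
      apply hpq
      have : ((p + P).toNat : ℤ) = ((q + P).toNat : ℤ) := by exact_mod_cast hcon.symm
      omega
    · intro hcon
      exact absurd hq hcon
  have hd0 : ∀ q ∈ Finset.Icc (-(P : ℤ)) (P : ℤ), q ≠ 0 → d q = 0 := by
    intro q hq hq0
    obtain ⟨hq1, hq2⟩ := Finset.mem_Icc.mp hq
    rcases mul_eq_zero.mp (hcoef q hq) with h | h
    · exact h
    · exfalso
      have hone : ω ^ q = 1 := by linear_combination h
      have hdvd : (N : ℤ) ∣ q := (hprim.zpow_eq_one_iff_dvd q).mp hone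
      have hdvd' : (N : ℤ) ∣ |q| := (dvd_abs _ _).mpr hdvd
      have := Int.le_of_dvd (abs_pos.mpr hq0) hdvd'
      have habs : |q| ≤ (P : ℤ) := abs_le.mpr ⟨hq1, hq2⟩
      have : (N : ℤ) ≤ P := le_trans this habs
      omega
  have hconst : ∀ n : ℕ, γ n - γ' n = d 0 := by
    intro n
    rw [hH n, Finset.sum_eq_single 0]
    · simp
    · intro p hp hp0
      rw [hd0 p hp hp0, zero_mul]
    · intro hcon
      exact absurd (Finset.mem_Icc.mpr ⟨by omega, by omega⟩) hcon
  intro n hn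
  have e1 : γ (n + 1) - γ n = γ' (n + 1) - γ' n := by
    have a := hconst (n + 1)
    have b := hconst n
    linear_combination a - b
  refine ⟨e1, ?_⟩
  have g1 : γ (n + 1) - γ' (n + 1) = (r (n + 1) : ℂ) - r' (n + 1) := hgg (n + 1) (by omega)
  have g2 : γ n - γ' n = (r n : ℂ) - r' n := hgg n (by omega)
  have hcc : ((r (n + 1) - r n : ℝ) : ℂ) = ((r' (n + 1) - r' n : ℝ) : ℂ) := by
    push_cast
    linear_combination hconst (n + 1) - hconst n - g1 + g2
  exact_mod_cast hcc
end

section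
/- Let s_K(t) = Σ_{k=0}^{K−1} c_k δ(t − t_k) with distinct t_k ∈ [0, τ) and nonzero c_k ∈ ℂ, and let ŝ_p = Σ_{k=0}^{K−1} c_k e^{−i p ω_0 t_k} with ω_0 = 2π/τ. If two such K-sparse signals have equal Fourier coefficients ŝ_p for all |p| ≤ K, then they are equal (same multiset of pairs (c_k, t_k)). -/
-- injectivity of exp map on [0,τ)
lemma exp_inj_aux (τ : ℝ) (hτ : 0 < τ) (s s' : ℝ) (hs : s ∈ Set.Ico 0 τ)
    (hs' : s' ∈ Set.Ico 0 τ)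
    (h : Complex.exp (-Complex.I * ((2 * Real.pi / τ) * s)) =
         Complex.exp (-Complex.I * ((2 * Real.pi / τ) * s'))) : s = s' := by
  rw [Complex.exp_eq_exp_iff_exists_int] at h
  obtain ⟨n, hn⟩ := h
  have h2 : Complex.I * (((2 * Real.pi / τ : ℝ) : ℂ) * s' - ((2 * Real.pi / τ : ℝ) : ℂ) * s)
      = Complex.I * (n * (2 * Real.pi)) := by
    push_cast at hn ⊢
    linear_combination hn
  have h3 := mul_left_cancel₀ Complex.I_ne_zero h2
  have h4 : (2 * Real.pi / τ) * s' - (2 * Real.pi / τ) * s = n * (2 * Real.pi) := by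
    exact_mod_cast h3
  have hπ := Real.pi_pos
  have h5 : s' - s = n * τ := by
    have hτ' : τ ≠ 0 := ne_of_gt hτ
    field_simp at h4
    nlinarith [h4]
  have h6 : (-1 : ℝ) < n := by nlinarith [hs.1, hs.2, hs'.1, hs'.2]
  have h7 : (n : ℝ) < 1 := by nlinarith [hs.1, hs.2, hs'.1, hs'.2]
  have h8 : n = 0 := by
    have : (-1 : ℤ) < n := by exact_mod_cast h6
    have : n < 1 := by exact_mod_cast h7
    omega
  rw [h8] at h5
  simp at h5
  linarith


lemma group_vanish {ι : Type*} [Fintype ι] [DecidableEq ι] (Z : ι → ℂ) (b : ι → ℂ)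
    (h : ∀ q : ℕ, q < Fintype.card ι → ∑ i, b i * Z i ^ q = 0) (w : ℂ) :
    ∑ i ∈ Finset.univ.filter (fun i => Z i = w), b i = 0 := by
  classical
  set T : Finset ℂ := Finset.univ.image Z with hT
  by_cases hw : w ∈ T
  · set n := T.card with hn
    have hnle : n ≤ Fintype.card ι := by
      calc n ≤ Finset.univ.card := Finset.card_image_le
      _ = Fintype.card ι := Finset.card_univ
    set e : Fin n → ℂ := fun j => (T.equivFin.symm j : ℂ) with he
    have hinj : Function.Injective e := fun j j' hjj' => by
      have := Subtype.ext hjj'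
      exact T.equivFin.symm.injective this
    set B : Fin n → ℂ := fun j => ∑ i ∈ Finset.univ.filter (fun i => Z i = e j), b i with hB
    have key : ∀ q : Fin n, ∑ j, B j * e j ^ (q : ℕ) = 0 := by
      intro q
      have h1 : ∀ j : Fin n, B j * e j ^ (q:ℕ)
          = ∑ i ∈ Finset.univ.filter (fun i => Z i = e j), b i * Z i ^ (q:ℕ) := by
        intro j
        rw [hB, Finset.sum_mul]
        apply Finset.sum_congr rfl
        intro i hi
        rw [Finset.mem_filter] at hi
        rw [hi.2]
      simp_rw [h1]
      have h2 : ∑ j : Fin n, ∑ i ∈ Finset.univ.filter (fun i => Z i = e j), b i * Z i ^ (q:ℕ)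
          = ∑ w ∈ T, ∑ i ∈ Finset.univ.filter (fun i => Z i = w), b i * Z i ^ (q:ℕ) := by
        rw [← Finset.sum_coe_sort T]
        exact (Equiv.sum_comp T.equivFin.symm
          (fun x : T => ∑ i ∈ Finset.univ.filter (fun i => Z i = (x : ℂ)), b i * Z i ^ (q:ℕ)))
      rw [h2, Finset.sum_fiberwise_of_maps_to (fun i _ => Finset.mem_image_of_mem Z (Finset.mem_univ i))]
      exact h q (lt_of_lt_of_le q.isLt hnle)
    have hB0 : B = 0 := Matrix.eq_zero_of_forall_pow_sum_mul_pow_eq_zero hinj key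
    obtain ⟨x, hx⟩ : ∃ x : T, (x : ℂ) = w := ⟨⟨w, hw⟩, rfl⟩
    have := congrFun hB0 (T.equivFin x)
    simp only [hB, Pi.zero_apply] at this
    rw [← hx]
    convert this using 3
    simp [he]
  · have : Finset.univ.filter (fun i => Z i = w) = ∅ := by
      apply Finset.filter_false_of_mem
      intro i _
      intro hZ
      exact hw (hZ ▸ Finset.mem_image_of_mem Z (Finset.mem_univ i))
    rw [this, Finset.sum_empty]

theorem spike_identifiability (K : ℕ) (τ : ℝ) (hτ : 0 < τ)
    (t t' : Fin K → ℝ) (c c' : Fin K → ℂ)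
    (ht : Function.Injective t) (ht' : Function.Injective t')
    (htmem : ∀ k, t k ∈ Set.Ico 0 τ) (htmem' : ∀ k, t' k ∈ Set.Ico 0 τ)
    (hc : ∀ k, c k ≠ 0) (hc' : ∀ k, c' k ≠ 0)
    (heq : ∀ p : ℤ, |p| ≤ (K : ℤ) →
      ∑ k, c k * Complex.exp (-Complex.I * (p * (2 * Real.pi / τ) * t k)) =
      ∑ k, c' k * Complex.exp (-Complex.I * (p * (2 * Real.pi / τ) * t' k))) :
    ∃ σ : Equiv.Perm (Fin K), ∀ k, c (σ k) = c' k ∧ t (σ k) = t' k := by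
  classical
  set g : ℝ → ℂ := fun s => Complex.exp (-Complex.I * ((2 * Real.pi / τ) * s)) with hg
  have hgne : ∀ s, g s ≠ 0 := fun s => Complex.exp_ne_zero _
  -- zpow form of the hypothesis
  have hzpow : ∀ (p : ℤ) (s : ℝ),
      Complex.exp (-Complex.I * (p * (2 * Real.pi / τ) * s)) = g s ^ p := by
    intro p s
    rw [hg]
    rw [← Complex.exp_int_mul]
    congr 1
    push_cast
    ring
  set ι := (Fin K ⊕ Fin K) with hι
  set Z : ι → ℂ := Sum.elim (fun k => g (t k)) (fun k => g (t' k)) with hZ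
  set a : ι → ℂ := Sum.elim c (fun k => -c' k) with ha
  have key : ∀ p : ℤ, |p| ≤ (K : ℤ) → ∑ i, a i * Z i ^ p = 0 := by
    intro p hp
    have := heq p hp
    simp_rw [hzpow p] at this
    rw [Fintype.sum_sum_type]
    simp only [ha, hZ, Sum.elim_inl, Sum.elim_inr]
    simp only [neg_mul]
    rw [Finset.sum_neg_distrib]
    linear_combination this
  set b : ι → ℂ := fun i => a i * Z i ^ (-(K : ℤ)) with hb
  have hq : ∀ q : ℕ, q < Fintype.card ι → ∑ i, b i * Z i ^ q = 0 := by
    intro q hqlt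
    have hcard : Fintype.card ι = K + K := by simp [hι]
    have h1 : ∀ i : ι, b i * Z i ^ q = a i * Z i ^ ((q : ℤ) - K) := by
      intro i
      have hz : Z i ≠ 0 := by cases i <;> exact Complex.exp_ne_zero _
      rw [hb, show ((q:ℤ) - K) = -(K:ℤ) + q by ring, zpow_add₀ hz, zpow_natCast, mul_assoc]
    simp_rw [h1]
    apply key
    rw [abs_le]
    omega
  have hfiber : ∀ w : ℂ, ∑ i ∈ Finset.univ.filter (fun i => Z i = w), a i = 0 := by
    intro w
    by_cases hw : ∃ i, Z i = w
    · obtain ⟨i0, hi0⟩ := hw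
      have hw0 : w ≠ 0 := by rw [← hi0]; cases i0 <;> exact Complex.exp_ne_zero _
      have := group_vanish Z b hq w
      rw [hb] at this
      have h2 : ∑ i ∈ Finset.univ.filter (fun i => Z i = w), a i * Z i ^ (-(K:ℤ))
          = (∑ i ∈ Finset.univ.filter (fun i => Z i = w), a i) * w ^ (-(K:ℤ)) := by
        rw [Finset.sum_mul]
        apply Finset.sum_congr rfl
        intro i hi
        rw [Finset.mem_filter] at hi
        rw [hi.2]
      rw [h2] at this
      rcases mul_eq_zero.mp this with h | h
      · exact h
      · exact absurd h (zpow_ne_zero _ hw0)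
    · push_neg at hw
      rw [Finset.filter_false_of_mem (fun i _ => hw i), Finset.sum_empty]
  -- for each k, find the matching j
  have hmatch : ∀ k : Fin K, ∃ j : Fin K, t j = t' k ∧ c j = c' k := by
    intro k
    have h0 := hfiber (g (t' k))
    rw [Finset.sum_filter, Fintype.sum_sum_type] at h0
    simp only [ha, hZ, Sum.elim_inl, Sum.elim_inr] at h0
    have h2 : ∑ j : Fin K, (if g (t' j) = g (t' k) then -c' j else 0) = -c' k := by
      rw [Finset.sum_eq_single k]
      · simp
      · intro j _ hjk
        rw [if_neg]
        intro hE
        exact hjk (ht' (exp_inj_aux τ hτ _ _ (htmem' j) (htmem' k) hE))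
      · simp
    rw [h2] at h0
    have h3 : ∑ j : Fin K, (if g (t j) = g (t' k) then c j else 0) = c' k := by
      linear_combination h0
    have hex : ∃ j : Fin K, g (t j) = g (t' k) := by
      by_contra hno
      push_neg at hno
      rw [Finset.sum_eq_zero (fun j _ => if_neg (hno j))] at h3
      exact hc' k h3.symm
    obtain ⟨j, hj⟩ := hex
    have htj : t j = t' k := exp_inj_aux τ hτ _ _ (htmem j) (htmem' k) hj
    refine ⟨j, htj, ?_⟩
    rw [Finset.sum_eq_single j (fun j' _ hj'j => if_neg (fun hE =>
      hj'j (ht (exp_inj_aux τ hτ _ _ (htmem j') (htmem j) (hE.trans hj.symm))))) (by simp)] at h3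
    rw [if_pos hj] at h3
    exact h3
  choose f hf1 hf2 using hmatch
  have hfinj : Function.Injective f := by
    intro k1 k2 hk
    apply ht'
    rw [← hf1 k1, ← hf1 k2, hk]
  let σ : Equiv.Perm (Fin K) := Equiv.ofBijective f (Finite.injective_iff_bijective.mp hfinj)
  exact ⟨σ, fun k => ⟨hf2 k, hf1 k⟩⟩
end
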